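/- For the energy-preserving collocation-like method on a vector space V with inner product g: if u^1 is defined by a degree-s polynomial σ with σ(0) = u^0, σ'(c_j h) = Ω_j G_j where G_j = ∫₀¹ (l_j(ξ)/b_j) ∇H(σ(ξh)) dξ and each Ω_j is skew-symmetric, and u^1 = σ(h), then H(u^1) = H(u^0). -/

import Mathlib

open RealInnerProductSpace

/-!
Along the curve ξ ↦ σ(ξh) the energy changes by h ∫₀¹ ⟪∇H(σ(ξh)), σ'(ξh)⟫ dξ. As σ' has degree
< s, it coincides with its Lagrange interpolant ∑ⱼ lⱼ(ξ) σ'(cⱼh) at the s nodes, so the integral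
splits as ∑ⱼ ⟪Iⱼ, σ'(cⱼh)⟫ with Iⱼ = ∫₀¹ lⱼ(ξ) ∇H(σ(ξh)) dξ. The collocation condition makes
σ'(cⱼh) = bⱼ⁻¹ Ωⱼ Iⱼ, and every term vanishes by skew-symmetry of Ωⱼ.
-/

open Finset

theorem Polynomial.eval_eq_sum_eval_mul_prod_div {F ι : Type*} [Field F] [Fintype ι]
    [DecidableEq ι] {c : ι → F} (hc : Function.Injective c) {P : Polynomial F}
    (hP : P.degree < Fintype.card ι) (t : F) :
    P.eval t = ∑ j, P.eval (c j) * ∏ i ∈ univ.erase j, (t - c i) / (c j - c i) := by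
  conv_lhs => rw [Lagrange.eq_interpolate (f := P) (s := univ) hc.injOn (by simpa using hP)]
  rw [Lagrange.interpolate_apply, eval_finsetSum]
  refine sum_congr rfl fun j _ => ?_
  rw [eval_mul, eval_C, Lagrange.basis, eval_prod]
  congr 1
  refine prod_congr rfl fun i _ => ?_
  rw [Lagrange.basisDivisor, eval_mul, eval_C, eval_sub, eval_X, eval_C, div_eq_mul_inv, mul_comm]

theorem sum_pow_smul_eq_sum_prod_div_smul {F ι E : Type*} [Field F] [Fintype ι] [DecidableEq ι]
    [AddCommGroup E] [Module F E] {c : ι → F} (hc : Function.Injective c) {m : ℕ}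
    (hm : m ≤ Fintype.card ι) (v : Fin m → E) (t : F) :
    ∑ k : Fin m, t ^ (k : ℕ) • v k =
      ∑ j, (∏ i ∈ univ.erase j, (t - c i) / (c j - c i)) • ∑ k : Fin m, c j ^ (k : ℕ) • v k := by
  have hpow (k : Fin m) :
      t ^ (k : ℕ) = ∑ j, c j ^ (k : ℕ) * ∏ i ∈ univ.erase j, (t - c i) / (c j - c i) := by
    simpa using Polynomial.eval_eq_sum_eval_mul_prod_div hc
      (P := Polynomial.X ^ (k : ℕ)) (by simpa using k.2.trans_le hm) t
  simp_rw [hpow, sum_smul, smul_sum, smul_smul, mul_comm]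
  exact sum_comm

theorem hasDerivAt_sum_pow_smul {𝕜 E : Type*} [NontriviallyNormedField 𝕜] [NormedAddCommGroup E]
    [NormedSpace 𝕜 E] {m : ℕ} (a : Fin (m + 1) → E) (t : 𝕜) :
    HasDerivAt (fun t => ∑ k : Fin (m + 1), t ^ (k : ℕ) • a k)
      (∑ k : Fin m, t ^ (k : ℕ) • ((k + 1 : ℕ) : 𝕜) • a k.succ) t := by
  simp_rw [Fin.sum_univ_succ (n := m), Fin.val_zero, pow_zero, one_smul, Fin.val_succ]
  refine ((HasDerivAt.fun_sum fun (k : Fin m) _ =>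
    (hasDerivAt_pow (k + 1) t).smul_const (a k.succ)).const_add _).congr_deriv ?_
  simp [smul_smul, mul_comm]

theorem ContDiff.continuous_gradient {E : Type*} [NormedAddCommGroup E] [InnerProductSpace ℝ E]
    [CompleteSpace E] {H : E → ℝ} (hH : ContDiff ℝ 1 H) : Continuous (gradient H) :=
  (InnerProductSpace.toDual ℝ E).symm.continuous.comp (hH.continuous_fderiv one_ne_zero)

theorem sub_eq_integral_inner_gradient {E : Type*} [NormedAddCommGroup E] [InnerProductSpace ℝ E]
    [CompleteSpace E] {H : E → ℝ} (hH : ContDiff ℝ 1 H) {γ γ' : ℝ → E}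
    (hγ : ∀ t, HasDerivAt γ (γ' t) t) (hγ' : Continuous γ') (a b : ℝ) :
    H (γ b) - H (γ a) = ∫ t in a..b, ⟪gradient H (γ t), γ' t⟫ := by
  have hγc : Continuous γ := continuous_iff_continuousAt.2 fun t => (hγ t).continuousAt
  refine (intervalIntegral.integral_eq_sub_of_hasDerivAt (f := fun t => H (γ t)) (fun t _ => ?_)
    (((hH.continuous_gradient.comp hγc).inner (𝕜 := ℝ) hγ').intervalIntegrable a b)).symm
  rw [Function.comp_apply, inner_gradient_left]
  exact (hH.differentiable one_ne_zero (γ t)).hasFDerivAt.comp_hasDerivAt t (hγ t)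

theorem integral_inner_sum_smul {E ι : Type*} [NormedAddCommGroup E] [InnerProductSpace ℝ E]
    [CompleteSpace E] [Fintype ι] {g : ℝ → E} {w : ι → ℝ → ℝ} (hg : Continuous g)
    (hw : ∀ j, Continuous (w j)) (D : ι → E) (a b : ℝ) :
    ∫ t in a..b, ⟪g t, ∑ j, w j t • D j⟫ = ∑ j, ⟪∫ t in a..b, w j t • g t, D j⟫ := by
  calc ∫ t in a..b, ⟪g t, ∑ j, w j t • D j⟫
      = ∫ t in a..b, ∑ j, innerSL ℝ (D j) (w j t • g t) := by
        simp only [innerSL_apply_apply, inner_sum, real_inner_smul_right, real_inner_comm]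
    _ = ∑ j, ∫ t in a..b, innerSL ℝ (D j) (w j t • g t) :=
        intervalIntegral.integral_finsetSum fun j _ =>
          (((innerSL ℝ (D j)).continuous.comp ((hw j).smul hg))).intervalIntegrable a b
    _ = ∑ j, ⟪∫ t in a..b, w j t • g t, D j⟫ :=
        sum_congr rfl fun j _ =>
          ((innerSL ℝ (D j)).intervalIntegral_comp_comm
            (((hw j).smul hg).intervalIntegrable a b)).trans (real_inner_comm _ _)

theorem collocation_method_preserves_energy_general
    {n : ℕ} (H : EuclideanSpace ℝ (Fin n) → ℝ) (hH : ContDiff ℝ 1 H)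
    {s : ℕ} (c : Fin s → ℝ) (hc : Function.Injective c)
    (l : Fin s → ℝ → ℝ)
    (hl : ∀ j ξ, l j ξ = ∏ i ∈ Finset.univ.erase j, (ξ - c i) / (c j - c i))
    (b : Fin s → ℝ)
    (h : ℝ)
    (Ω : Fin s → EuclideanSpace ℝ (Fin n) →ₗ[ℝ] EuclideanSpace ℝ (Fin n))
    (hskew : ∀ j x, ⟪x, Ω j x⟫ = 0)
    (σ : ℝ → EuclideanSpace ℝ (Fin n)) (a : Fin (s + 1) → EuclideanSpace ℝ (Fin n))
    (hσ : σ = fun t => ∑ i : Fin (s + 1), t ^ (i : ℕ) • a i)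
    (u0 u1 : EuclideanSpace ℝ (Fin n))
    (hσ0 : σ 0 = u0)
    (hcoll : ∀ j, deriv σ (c j * h) =
      Ω j (∫ ξ in (0:ℝ)..1, (l j ξ / b j) • gradient H (σ (ξ * h))))
    (hu1 : u1 = σ h) :
    H u1 = H u0 := by
  set P : ℝ → EuclideanSpace ℝ (Fin n) :=
    fun x => ∑ k : Fin s, x ^ (k : ℕ) • ((k + 1 : ℕ) : ℝ) • a k.succ
  have hσP (x : ℝ) : HasDerivAt σ (P x) x := hσ ▸ hasDerivAt_sum_pow_smul a x
  have hP (t : ℝ) : P (t * h) = ∑ j, l j t • P (c j * h) := by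
    simpa only [P, mul_pow, mul_smul, hl] using
      sum_pow_smul_eq_sum_prod_div_smul hc (Fintype.card_fin s).ge
        (fun k => h ^ (k : ℕ) • ((k + 1 : ℕ) : ℝ) • a k.succ) t
  have hP_cont : Continuous P := by fun_prop
  have hσ_cont : Continuous σ := continuous_iff_continuousAt.2 fun x => (hσP x).continuousAt
  have hg_cont : Continuous fun t => gradient H (σ (t * h)) :=
    hH.continuous_gradient.comp (by fun_prop)
  have hl_cont (j : Fin s) : Continuous (l j) := by
    rw [show l j = _ from funext (hl j)]
    fun_prop
  have hterm (j : Fin s) : ⟪∫ t in (0:ℝ)..1, l j t • gradient H (σ (t * h)), P (c j * h)⟫ = 0 := by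
    rw [← (hσP (c j * h)).deriv, hcoll j]
    simp_rw [div_eq_inv_mul, mul_smul, intervalIntegral.integral_smul,
      map_smul, inner_smul_right, hskew, mul_zero]
  have henergy : H u1 - H u0 = 0 :=
    calc H u1 - H u0 = ∫ t in (0:ℝ)..1, ⟪gradient H (σ (t * h)), h • P (t * h)⟫ := by
          rw [hu1, ← hσ0]
          simpa only [one_mul, zero_mul] using
            sub_eq_integral_inner_gradient hH (γ := fun t => σ (t * h))
              (fun t => (hσP (t * h)).scomp t (hasDerivAt_mul_const h)) (by fun_prop) 0 1
      _ = h * ∑ j, ⟪∫ t in (0:ℝ)..1, l j t • gradient H (σ (t * h)), P (c j * h)⟫ := by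
          simp_rw [inner_smul_right]
          rw [intervalIntegral.integral_const_mul, ← integral_inner_sum_smul hg_cont hl_cont]
          exact congrArg _ (intervalIntegral.integral_congr fun t _ => by rw [hP t])
      _ = 0 := by rw [sum_eq_zero fun j _ => hterm j, mul_zero]
  exact sub_eq_zero.1 henergy

/-- Energy preservation of the collocation-like method (Euclidean specialization):
if `σ` is a polynomial of degree ≤ s with `σ(0) = u⁰`,
`σ'(c_j h) = Ω_j G_j` where `G_j = ∫₀¹ (l_j(ξ)/b_j) ∇H(σ(ξh)) dξ` and each `Ω_j` is
skew-symmetric, then `u¹ = σ(h)` satisfies `H(u¹) = H(u⁰)`. -/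
theorem collocation_method_preserves_energy
    {n : ℕ} (H : EuclideanSpace ℝ (Fin n) → ℝ) (hH : ContDiff ℝ 1 H)
    {s : ℕ} (hs : 1 ≤ s) (c : Fin s → ℝ) (hc : Function.Injective c)
    (l : Fin s → ℝ → ℝ)
    (hl : ∀ j ξ, l j ξ = ∏ i ∈ Finset.univ.erase j, (ξ - c i) / (c j - c i))
    (b : Fin s → ℝ) (hb : ∀ j, b j = ∫ ξ in (0:ℝ)..1, l j ξ) (hb0 : ∀ j, b j ≠ 0)
    (h : ℝ) (hh : 0 < h)
    (Ω : Fin s → EuclideanSpace ℝ (Fin n) →ₗ[ℝ] EuclideanSpace ℝ (Fin n))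
    (hskew : ∀ j x, ⟪x, Ω j x⟫ = 0)
    (σ : ℝ → EuclideanSpace ℝ (Fin n)) (a : Fin (s + 1) → EuclideanSpace ℝ (Fin n))
    (hσ : σ = fun t => ∑ i : Fin (s + 1), t ^ (i : ℕ) • a i)
    (u0 u1 : EuclideanSpace ℝ (Fin n))
    (hσ0 : σ 0 = u0)
    (hcoll : ∀ j, deriv σ (c j * h) =
      Ω j (∫ ξ in (0:ℝ)..1, (l j ξ / b j) • gradient H (σ (ξ * h))))
    (hu1 : u1 = σ h) :
    H u1 = H u0 :=
  collocation_method_preserves_energy_general H hH c hc l hl b h Ω hskew σ a hσ u0 u1 hσ0 hcoll hu1
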